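/- arXiv:2507.03031 — 4 statements merged into one kernel-verified Lean document; each statement's English description precedes it below -/
import Mathlib

section
/- Let H_1, …, H_N be affine hyperplanes in ℝ^d (each of the form {y ∈ ℝ^d : ⟨u_i, y⟩ = b_i} with u_i ≠ 0). Then the complement ℝ^d \ (H_1 ∪ ⋯ ∪ H_N) has at most ∑_{k=0}^{d} (N choose k) connected components. -/
/-!
Each point off the hyperplanes lies in a cell on which every affine form `⟪u i, ·⟫ - b i` has a
fixed sign. Cells are convex, hence connected, so there are at most as many regions as realizable
sign vectors. These are counted by induction on the number of forms, inside an affine subspace of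
dimension at most `d`: forgetting the last form, a sign vector of the others has at most two
extensions, and when both occur the segment joining their witnesses crosses the last hyperplane
inside the cell. Such vectors are therefore realized on the section of the subspace by that
hyperplane, which has smaller dimension, and Pascal's rule yields `∑_{k ≤ d} (N choose k)`.
-/

open scoped RealInnerProductSpace

open Set Module

theorem Set.ncard_eq_ncard_image_add_ncard_inter {α β : Type*} [Finite α] (r : α → β)
    (s t : Set α) (hst : InjOn r (s ∩ t)) (hsdt : InjOn r (s \ t)) :
    s.ncard = (r '' s).ncard + (r '' (s ∩ t) ∩ r '' (s \ t)).ncard := by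
  rw [← ncard_inter_add_ncard_sdiff_eq_ncard s t, ← hst.ncard_image, ← hsdt.ncard_image,
    ← ncard_union_add_ncard_inter _ _ ((toFinite _).image r) ((toFinite _).image r),
    ← image_union, inter_union_sdiff]

theorem Nat.sum_range_succ_choose_succ (N d : ℕ) :
    ∑ k ∈ Finset.range (d + 1), (N + 1).choose k =
      ∑ k ∈ Finset.range (d + 1), N.choose k + ∑ k ∈ Finset.range d, N.choose k := by
  rw [Finset.sum_range_succ', Finset.sum_range_succ' (fun k => N.choose k)]
  simp only [Nat.choose_succ_succ', Finset.sum_add_distrib, Nat.choose_zero_right]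
  ring

theorem Convex.exists_affineMap_apply_eq {E : Type*} [AddCommGroup E] [Module ℝ E] {s : Set E}
    (hs : Convex ℝ s) (g : E →ᵃ[ℝ] ℝ) {x y : E} (hx : x ∈ s) (hy : y ∈ s) {c : ℝ}
    (hyc : g y ≤ c) (hcx : c ≤ g x) : ∃ z ∈ s, g z = c :=
  (hs.affine_image g).ordConnected.out (mem_image_of_mem g hy) (mem_image_of_mem g hx) ⟨hyc, hcx⟩

namespace AffineSubspace

variable {k V P : Type*} [Field k] [AddCommGroup V] [Module k V] [AddTorsor V P]

theorem finrank_direction_inf_ker_lt (A : AffineSubspace k P) [FiniteDimensional k A.direction]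
    (g : P →ᵃ[k] k) {x y : P} (hx : x ∈ A) (hy : y ∈ A) (hxy : g x ≠ g y) :
    finrank k ↥(A.direction ⊓ LinearMap.ker g.linear) < finrank k A.direction := by
  refine Submodule.finrank_lt_finrank_of_lt (inf_le_left.lt_of_ne fun h => ?_)
  have hxy' : x -ᵥ y ∈ A.direction ⊓ LinearMap.ker g.linear := by
    rw [h]; exact vsub_mem_direction hx hy
  exact hxy (sub_eq_zero.1 (by simpa [g.linearMap_vsub] using hxy'.2))

theorem inter_preimage_singleton_subset_mk' (A : AffineSubspace k P) (g : P →ᵃ[k] k) {z : P}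
    (hz : z ∈ A) : (A : Set P) ∩ g ⁻¹' {g z} ⊆ mk' z (A.direction ⊓ LinearMap.ker g.linear) :=
  fun x ⟨hxA, hx⟩ => mem_mk'.2
    ⟨vsub_mem_direction hxA hz, by simpa [g.linearMap_vsub] using sub_eq_zero.2 hx⟩

end AffineSubspace

theorem ConnectedComponents.coe_eq_coe_of_isPreconnected {X : Type*} [TopologicalSpace X]
    {U s : Set X} (hs : IsPreconnected s) (hsU : s ⊆ U) {x y : U} (hx : (x : X) ∈ s)
    (hy : (y : X) ∈ s) : (x : ConnectedComponents U) = y := by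
  have hs' : IsPreconnected ((↑) ⁻¹' s : Set U) := by
    rwa [← Topology.IsInducing.subtypeVal.isPreconnected_image, Subtype.image_preimage_coe,
      inter_eq_right.2 hsU]
  exact ConnectedComponents.coe_eq_coe'.2 (hs'.subset_connectedComponent hy hx)

section SignPatterns

variable {E ι : Type*} [AddCommGroup E] [Module ℝ E]

def signCell (f : ι → E →ᵃ[ℝ] ℝ) (τ : ι → Bool) : Set E :=
  ⋂ i, f i ⁻¹' if τ i then Ioi 0 else Iio 0

def signPatterns (f : ι → E →ᵃ[ℝ] ℝ) (s : Set E) : Set (ι → Bool) :=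
  {τ | (s ∩ signCell f τ).Nonempty}

variable (f : ι → E →ᵃ[ℝ] ℝ)

theorem convex_signCell (τ : ι → Bool) : Convex ℝ (signCell f τ) :=
  convex_iInter fun i => by
    split
    exacts [(convex_Ioi 0).affine_preimage (f i), (convex_Iio 0).affine_preimage (f i)]

theorem signCell_subset (τ : ι → Bool) : signCell f τ ⊆ {x | ∀ i, f i x ≠ 0} := by
  intro x hx i
  have hi := mem_iInter.1 hx i
  split at hi
  exacts [(mem_Ioi.1 hi).ne', (mem_Iio.1 hi).ne]

theorem mem_signCell_sign {x : E} (hx : ∀ i, f i x ≠ 0) :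
    x ∈ signCell f fun i => decide (0 < f i x) :=
  mem_iInter.2 fun i => by
    by_cases h : 0 < f i x
    · simp [h]
    · simpa [h] using lt_of_le_of_ne (not_lt.1 h) (hx i)

theorem signCell_subset_init {n : ℕ} (f : Fin (n + 1) → E →ᵃ[ℝ] ℝ) (τ : Fin (n + 1) → Bool) :
    signCell f τ ⊆ signCell (Fin.init f) (Fin.init τ) :=
  fun _ hx => mem_iInter.2 fun i => mem_iInter.1 hx i.castSucc

theorem mem_signCell_last {n : ℕ} {f : Fin (n + 1) → E →ᵃ[ℝ] ℝ} {τ : Fin (n + 1) → Bool} {x : E}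
    (hx : x ∈ signCell f τ) : f (Fin.last n) x ∈ if τ (Fin.last n) then Ioi 0 else Iio 0 :=
  mem_iInter.1 hx _

end SignPatterns

section Counting

variable {E : Type*} [AddCommGroup E] [Module ℝ E]

def twoSidedSignPatterns {n : ℕ} (f : Fin (n + 1) → E →ᵃ[ℝ] ℝ) (s : Set E) :
    Set (Fin n → Bool) :=
  Fin.init '' (signPatterns f s ∩ {ε | ε (Fin.last n)}) ∩
    Fin.init '' (signPatterns f s \ {ε | ε (Fin.last n)})

theorem exists_mem_signCell_init_of_mem_twoSidedSignPatterns {n : ℕ} (f : Fin (n + 1) → E →ᵃ[ℝ] ℝ)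
    (s : Set E) {τ : Fin n → Bool} (hτ : τ ∈ twoSidedSignPatterns f s) :
    ∃ x ∈ s ∩ signCell (Fin.init f) τ, ∃ y ∈ s ∩ signCell (Fin.init f) τ,
      f (Fin.last n) y < 0 ∧ 0 < f (Fin.last n) x := by
  obtain ⟨⟨ε, ⟨⟨x, hxs, hx⟩, hεx⟩, rfl⟩, ⟨ε', ⟨⟨y, hys, hy⟩, hεy⟩, hεε'⟩⟩ := hτ
  have hfx := mem_signCell_last hx
  have hfy := mem_signCell_last hy
  simp only [mem_ofPred_eq, Bool.not_eq_true] at hεx hεy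
  simp only [hεx, hεy, if_true, Bool.false_eq_true, if_false, mem_Ioi, mem_Iio] at hfx hfy
  exact ⟨x, ⟨hxs, signCell_subset_init f ε hx⟩, y, ⟨hys, hεε' ▸ signCell_subset_init f ε' hy⟩,
    hfy, hfx⟩

theorem exists_finrank_direction_lt_and_subset_signPatterns {n : ℕ}
    (f : Fin (n + 1) → E →ᵃ[ℝ] ℝ) (A : AffineSubspace ℝ E) [FiniteDimensional ℝ A.direction]
    (hT : (twoSidedSignPatterns f A).Nonempty) :
    ∃ A' : AffineSubspace ℝ E, finrank ℝ A'.direction < finrank ℝ A.direction ∧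
      twoSidedSignPatterns f A ⊆ signPatterns (Fin.init f) A' := by
  have hzero (τ) (hτ : τ ∈ twoSidedSignPatterns f A) :
      ∃ z ∈ (A : Set E) ∩ signCell (Fin.init f) τ, f (Fin.last n) z = 0 := by
    obtain ⟨x, hx, y, hy, hfy, hfx⟩ := exists_mem_signCell_init_of_mem_twoSidedSignPatterns f A hτ
    exact (A.convex.inter (convex_signCell _ τ)).exists_affineMap_apply_eq _ hx hy hfy.le hfx.le
  obtain ⟨τ₀, hτ₀⟩ := hT
  obtain ⟨z₀, ⟨hz₀A, -⟩, hz₀⟩ := hzero τ₀ hτ₀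
  obtain ⟨x, ⟨hxA, -⟩, -, -, -, hfx⟩ := exists_mem_signCell_init_of_mem_twoSidedSignPatterns f A hτ₀
  refine ⟨.mk' z₀ (A.direction ⊓ LinearMap.ker (f (Fin.last n)).linear), ?_, fun τ hτ => ?_⟩
  · rw [AffineSubspace.direction_mk']
    exact A.finrank_direction_inf_ker_lt _ hxA hz₀A (by rw [hz₀]; exact hfx.ne')
  · obtain ⟨z, ⟨hzA, hz⟩, hz0⟩ := hzero τ hτ
    refine ⟨z, A.inter_preimage_singleton_subset_mk' _ hz₀A ⟨hzA, ?_⟩, hz⟩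
    simp [hz0, hz₀]

theorem ncard_signPatterns_le [FiniteDimensional ℝ E] {N : ℕ} (f : Fin N → E →ᵃ[ℝ] ℝ)
    (A : AffineSubspace ℝ E) {d : ℕ} (hA : finrank ℝ A.direction ≤ d) :
    (signPatterns f A).ncard ≤ ∑ k ∈ Finset.range (d + 1), N.choose k := by
  induction N generalizing d A with
  | zero =>
    calc (signPatterns f A).ncard ≤ 1 := ncard_le_one_of_subsingleton _
      _ ≤ _ := by simp [Finset.sum_range_succ']
  | succ N ih =>
    set S := signPatterns f A
    set t : Set (Fin (N + 1) → Bool) := {ε | ε (Fin.last N)}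
    have hinj (b : Bool) : InjOn Fin.init {ε : Fin (N + 1) → Bool | ε (Fin.last N) = b} :=
      fun ε hε ε' hε' h => by
        rw [← Fin.snoc_init_self ε, ← Fin.snoc_init_self ε', h, mem_ofPred.1 hε, mem_ofPred.1 hε']
    rw [ncard_eq_ncard_image_add_ncard_inter Fin.init S t
      ((hinj true).mono inter_subset_right) ((hinj false).mono fun ε hε => by simpa [t] using hε.2),
      Nat.sum_range_succ_choose_succ]
    gcongr ?_ + ?_
    · calc (Fin.init '' S).ncard ≤ (signPatterns (Fin.init f) A).ncard := by
            refine ncard_le_ncard ?_ (toFinite _)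
            rintro - ⟨ε, ⟨x, hxA, hx⟩, rfl⟩
            exact ⟨x, hxA, signCell_subset_init f ε hx⟩
        _ ≤ _ := ih _ A hA
    · change (twoSidedSignPatterns f A).ncard ≤ _
      rcases (twoSidedSignPatterns f A).eq_empty_or_nonempty with hT | hT
      · simp [hT]
      obtain ⟨A', hdim, hsub⟩ := exists_finrank_direction_lt_and_subset_signPatterns f A hT
      obtain ⟨d', rfl⟩ : ∃ d', d = d' + 1 := ⟨d - 1, by omega⟩
      exact (ncard_le_ncard hsub (toFinite _)).trans (ih _ A' (by omega))

end Counting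

theorem exists_surjective_signPatterns_connectedComponents {E ι : Type*} [AddCommGroup E]
    [Module ℝ E] [TopologicalSpace E] [IsTopologicalAddGroup E] [ContinuousSMul ℝ E]
    (f : ι → E →ᵃ[ℝ] ℝ) :
    ∃ φ : signPatterns f univ → ConnectedComponents {x | ∀ i, f i x ≠ 0}, φ.Surjective := by
  choose p hp using fun τ : signPatterns f univ => τ.2
  refine ⟨fun τ => (⟨p τ, signCell_subset f τ (hp τ).2⟩ : {x | ∀ i, f i x ≠ 0}), ?_⟩
  rintro ⟨x⟩
  have hx := mem_signCell_sign f x.2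
  exact ⟨⟨_, x, mem_univ _, hx⟩, ConnectedComponents.coe_eq_coe_of_isPreconnected
    (convex_signCell f _).isPreconnected (signCell_subset f _) (hp _).2 hx⟩

theorem hyperplane_arrangement_region_count_general
    (d N : ℕ)
    (u : Fin N → EuclideanSpace ℝ (Fin d))
    (b : Fin N → ℝ) :
    Finite (ConnectedComponents {x : EuclideanSpace ℝ (Fin d) | ∀ i, ⟪u i, x⟫ ≠ b i}) ∧
      Nat.card (ConnectedComponents {x : EuclideanSpace ℝ (Fin d) | ∀ i, ⟪u i, x⟫ ≠ b i}) ≤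
        ∑ k ∈ Finset.range (d + 1), N.choose k := by
  set f : Fin N → EuclideanSpace ℝ (Fin d) →ᵃ[ℝ] ℝ := fun i =>
    (innerₗ _ (u i)).toAffineMap - AffineMap.const ℝ _ (b i)
  have hU : {x : EuclideanSpace ℝ (Fin d) | ∀ i, ⟪u i, x⟫ ≠ b i} = {x | ∀ i, f i x ≠ 0} := by
    simp [f, sub_eq_zero]
  have hA : finrank ℝ (⊤ : AffineSubspace ℝ (EuclideanSpace ℝ (Fin d))).direction ≤ d := by
    rw [AffineSubspace.direction_top, finrank_top, finrank_euclideanSpace_fin]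
  obtain ⟨φ, hφ⟩ := exists_surjective_signPatterns_connectedComponents f
  have hcount := ncard_signPatterns_le f ⊤ hA
  rw [AffineSubspace.top_coe, ← Nat.card_coe_set_eq] at hcount
  rw [hU]
  exact ⟨Finite.of_surjective φ hφ, (Nat.card_le_card_of_surjective φ hφ).trans hcount⟩

/-- The complement of `N` affine hyperplanes in `ℝ^d` has at most
`∑_{k=0}^{d} (N choose k)` connected components. -/
theorem hyperplane_arrangement_region_count
    (d N : ℕ) (hd : 1 ≤ d)
    (u : Fin N → EuclideanSpace ℝ (Fin d)) (hu : ∀ i, u i ≠ 0)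
    (b : Fin N → ℝ) :
    Finite (ConnectedComponents {x : EuclideanSpace ℝ (Fin d) | ∀ i, ⟪u i, x⟫ ≠ b i}) ∧
      Nat.card (ConnectedComponents {x : EuclideanSpace ℝ (Fin d) | ∀ i, ⟪u i, x⟫ ≠ b i}) ≤
        ∑ k ∈ Finset.range (d + 1), N.choose k :=
  hyperplane_arrangement_region_count_general d N u b
end

section
/- Fix d ≥ 1, R > 0, 0 < δ ≤ R, unit vectors u_1, …, u_N ∈ ℝ^d, and a point x ∈ ℝ^d with ‖x‖ ≤ R. Let b_1, …, b_N be independent random variables, each uniformly distributed on [−R, R], and let H_i = {y : ⟨u_i, y⟩ = b_i}. Then the probability that dist(x, H_i) > δ for every i = 1, …, N is at most (1 − δ/(2R))^N ≤ exp(−Nδ/(2R)). -/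
/-!
Moving `x` orthogonally onto `H_i` shows `dist(x, H_i) ≤ |⟪u_i, x⟫ - b_i|`, so safety forces every
`b_i` outside the interval `[⟪u_i, x⟫ - δ, ⟪u_i, x⟫ + δ]`. Since `|⟪u_i, x⟫| ≤ R`, at least length `δ`
of that interval lies in `[-R, R]`, so each constraint has probability at most `1 - δ/(2R)`, and
independence multiplies these bounds. Finally `1 - t ≤ exp(-t)`.
-/

open scoped RealInnerProductSpace
open MeasureTheory ProbabilityTheory Set Metric

lemma infDist_hyperplane_le_abs_inner_sub {E : Type*} [NormedAddCommGroup E]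
    [InnerProductSpace ℝ E] {u : E} (hu : ‖u‖ = 1) (x : E) (b : ℝ) :
    infDist x {y | ⟪u, y⟫ = b} ≤ |⟪u, x⟫ - b| := by
  have hproj : x - (⟪u, x⟫ - b) • u ∈ {y | ⟪u, y⟫ = b} := by
    simp [inner_sub_right, real_inner_smul_right, hu]
  calc infDist x {y | ⟪u, y⟫ = b} ≤ dist x (x - (⟪u, x⟫ - b) • u) := infDist_le_dist_of_mem hproj
    _ = |⟪u, x⟫ - b| := by simp [norm_smul, hu]

lemma volume_Icc_sdiff_closedBall_le {R δ a : ℝ} (hδ : 0 ≤ δ) (hδR : δ ≤ 2 * R) (ha : |a| ≤ R) :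
    volume (Icc (-R) R \ closedBall a δ) ≤ ENNReal.ofReal (2 * R - δ) := by
  obtain ⟨ha₁, ha₂⟩ := abs_le.mp ha
  have hinter : ENNReal.ofReal δ ≤ volume (Icc (-R) R ∩ closedBall a δ) := by
    rw [Real.closedBall_eq_Icc, Icc_inter_Icc, Real.volume_Icc]
    apply ENNReal.ofReal_le_ofReal
    rcases min_cases R (a + δ) with ⟨h₁, -⟩ | ⟨h₁, -⟩ <;>
      rcases max_cases (-R) (a - δ) with ⟨h₂, -⟩ | ⟨h₂, -⟩ <;>
      rw [h₁, h₂] <;> linarith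
  have hsplit := measure_sdiff_add_inter (μ := volume) (Icc (-R) R) (measurableSet_closedBall (x := a) (ε := δ))
  rw [Real.volume_Icc] at hsplit
  calc volume (Icc (-R) R \ closedBall a δ)
      ≤ ENNReal.ofReal (R - -R) - ENNReal.ofReal δ :=
        ENNReal.le_sub_of_add_le_right ENNReal.ofReal_ne_top (hsplit ▸ by gcongr)
    _ = ENNReal.ofReal (2 * R - δ) := by rw [← ENNReal.ofReal_sub _ hδ]; ring_nf

lemma uniform_Icc_eq_cond (R : ℝ) :
    (ENNReal.ofReal (2 * R))⁻¹ • volume.restrict (Icc (-R) R) = volume[|Icc (-R) R] := by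
  rw [ProbabilityTheory.cond, Real.volume_Icc, sub_neg_eq_add, ← two_mul]

lemma cond_Icc_compl_closedBall_le {R δ a : ℝ} (hR : 0 < R) (hδ : 0 ≤ δ) (hδR : δ ≤ 2 * R)
    (ha : |a| ≤ R) :
    volume[|Icc (-R) R] (closedBall a δ)ᶜ ≤ ENNReal.ofReal (1 - δ / (2 * R)) := by
  rw [← uniform_Icc_eq_cond, Measure.smul_apply, smul_eq_mul,
    Measure.restrict_apply measurableSet_closedBall.compl, inter_comm, ← sdiff_eq]
  calc (ENNReal.ofReal (2 * R))⁻¹ * volume (Icc (-R) R \ closedBall a δ)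
      ≤ (ENNReal.ofReal (2 * R))⁻¹ * ENNReal.ofReal (2 * R - δ) := by
        gcongr; exact volume_Icc_sdiff_closedBall_le hδ hδR ha
    _ = ENNReal.ofReal (1 - δ / (2 * R)) := by
        rw [← ENNReal.div_eq_inv_mul, ← ENNReal.ofReal_div_of_pos (by positivity)]
        congr 1; field_simp

lemma one_sub_pow_le_exp_neg_mul {t : ℝ} (ht : t ≤ 1) (n : ℕ) :
    (1 - t) ^ n ≤ Real.exp (-(n * t)) := by
  calc (1 - t) ^ n ≤ Real.exp (-t) ^ n :=
        pow_le_pow_left₀ (by linarith) (Real.one_sub_le_exp_neg t) n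
    _ = Real.exp (-(n * t)) := by rw [← Real.exp_nat_mul]; ring_nf

theorem random_hyperplanes_safe_probability_bound_general
    (d N : ℕ)
    (R δ : ℝ) (hR : 0 < R) (hδ : 0 < δ) (hδR : δ ≤ R)
    (u : Fin N → EuclideanSpace ℝ (Fin d)) (hu : ∀ i, ‖u i‖ = 1)
    (x : EuclideanSpace ℝ (Fin d)) (hx : ‖x‖ ≤ R) :
    (Measure.pi (fun _ : Fin N =>
        (ENNReal.ofReal (2 * R))⁻¹ • volume.restrict (Set.Icc (-R) R)))
        {b : Fin N → ℝ | ∀ i,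
          δ < Metric.infDist x {y : EuclideanSpace ℝ (Fin d) | ⟪u i, y⟫ = b i}} ≤
      ENNReal.ofReal ((1 - δ / (2 * R)) ^ N) ∧
    (1 - δ / (2 * R)) ^ N ≤ Real.exp (-(N * δ / (2 * R))) := by
  have hratio : δ / (2 * R) ≤ 1 := by rw [div_le_one (by positivity)]; linarith
  have hsafe : {b : Fin N → ℝ | ∀ i, δ < infDist x {y | ⟪u i, y⟫ = b i}} ⊆
      univ.pi fun i => (closedBall ⟪u i, x⟫ δ)ᶜ := fun b hb i _ => by
    simpa [Real.dist_eq, abs_sub_comm] using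
      (hb i).trans_le (infDist_hyperplane_le_abs_inner_sub (hu i) x (b i))
  have hproj : ∀ i, |⟪u i, x⟫| ≤ R := fun i =>
    (abs_real_inner_le_norm _ _).trans (by rw [hu i, one_mul]; exact hx)
  rw [uniform_Icc_eq_cond]
  refine ⟨?_, by simpa [mul_div_assoc] using one_sub_pow_le_exp_neg_mul hratio N⟩
  calc Measure.pi (fun _ => volume[|Icc (-R) R]) {b | ∀ i, δ < infDist x {y | ⟪u i, y⟫ = b i}}
      ≤ ∏ i, volume[|Icc (-R) R] (closedBall ⟪u i, x⟫ δ)ᶜ :=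
        (measure_mono hsafe).trans_eq (Measure.pi_pi _ _)
    _ ≤ ∏ _i : Fin N, ENNReal.ofReal (1 - δ / (2 * R)) := by
        gcongr with i
        exact cond_Icc_compl_closedBall_le hR hδ.le (by linarith) (hproj i)
    _ = ENNReal.ofReal ((1 - δ / (2 * R)) ^ N) := by
        rw [Finset.prod_const, Finset.card_univ, Fintype.card_fin,
          ENNReal.ofReal_pow (by linarith)]

/-- If the biases `b i` are independent and uniform on `[-R, R]`, the probability
that a fixed point `x` in the ball of radius `R` stays at distance more than `δ`
from every random hyperplane `{y : ⟪u i, y⟫ = b i}` is at most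
`(1 − δ/(2R))^N ≤ exp(−Nδ/(2R))`. -/
theorem random_hyperplanes_safe_probability_bound
    (d N : ℕ) (hd : 1 ≤ d)
    (R δ : ℝ) (hR : 0 < R) (hδ : 0 < δ) (hδR : δ ≤ R)
    (u : Fin N → EuclideanSpace ℝ (Fin d)) (hu : ∀ i, ‖u i‖ = 1)
    (x : EuclideanSpace ℝ (Fin d)) (hx : ‖x‖ ≤ R) :
    (Measure.pi (fun _ : Fin N =>
        (ENNReal.ofReal (2 * R))⁻¹ • volume.restrict (Set.Icc (-R) R)))
        {b : Fin N → ℝ | ∀ i,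
          δ < Metric.infDist x {y : EuclideanSpace ℝ (Fin d) | ⟪u i, y⟫ = b i}} ≤
      ENNReal.ofReal ((1 - δ / (2 * R)) ^ N) ∧
    (1 - δ / (2 * R)) ^ N ≤ Real.exp (-(N * δ / (2 * R))) :=
  random_hyperplanes_safe_probability_bound_general d N R δ hR hδ hδR u hu x hx
end

section
/- Let ε > 0, let f : ℝ → ℝ, and suppose there are m triples a_j < m_j < c_j with m_j = (a_j + c_j)/2, the intervals (a_j, c_j) pairwise disjoint, and |f(m_j) − (f(a_j) + f(c_j))/2| > 2ε for every j = 1, …, m. Then any function g of the form g(x) = c + a·x + ∑_{i=1}^N a_i · max(0, x − b_i) satisfying |f(x) − g(x)| ≤ ε at all the points a_j, m_j, c_j must have at least one breakpoint b_i in each open interval (a_j, c_j); in particular N ≥ m. -/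
/-!
A ReLU network is affine on every interval free of its breakpoints, so there it
satisfies `2 g((x + y)/2) = g x + g y` exactly. If `g` is within `ε` of `f` at
`x`, `y` and `(x + y)/2`, then `f` can deviate from its midpoint average by at
most `ε + ε/2 + ε/2 = 2ε`. Hence a deviation exceeding `2ε` forces a breakpoint
inside `(x, y)`, and disjoint intervals force distinct breakpoints.
-/

open Set Function

def reluNetwork {ι : Type*} [Fintype ι] (c a : ℝ) (A b : ι → ℝ) (x : ℝ) : ℝ :=
  c + a * x + ∑ i, A i * max 0 (x - b i)

lemma two_mul_relu_midpoint {x y β : ℝ} (hxy : x ≤ y) (hβ : β ∉ Ioo x y) :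
    2 * max 0 ((x + y) / 2 - β) = max 0 (x - β) + max 0 (y - β) := by
  rcases le_or_gt β x with hβx | hxβ
  · rw [max_eq_right (by linarith), max_eq_right (by linarith), max_eq_right (by linarith)]
    ring
  · have hyβ : y ≤ β := not_lt.mp fun hβy => hβ ⟨hxβ, hβy⟩
    rw [max_eq_left (by linarith), max_eq_left (by linarith), max_eq_left (by linarith)]
    ring

lemma two_mul_reluNetwork_midpoint {ι : Type*} [Fintype ι] (c a : ℝ) (A b : ι → ℝ)
    {x y : ℝ} (hxy : x ≤ y) (hb : ∀ i, b i ∉ Ioo x y) :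
    2 * reluNetwork c a A b ((x + y) / 2) = reluNetwork c a A b x + reluNetwork c a A b y := by
  have hsum : 2 * ∑ i, A i * max 0 ((x + y) / 2 - b i)
      = ∑ i, A i * max 0 (x - b i) + ∑ i, A i * max 0 (y - b i) := by
    rw [Finset.mul_sum, ← Finset.sum_add_distrib]
    refine Finset.sum_congr rfl fun i _ => ?_
    linear_combination A i * two_mul_relu_midpoint hxy (hb i)
  simp only [reluNetwork]
  linear_combination hsum

lemma abs_sub_midpoint_average_le {f g : ℝ → ℝ} {x y ε : ℝ}
    (hg : 2 * g ((x + y) / 2) = g x + g y) (hx : |f x - g x| ≤ ε)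
    (hmid : |f ((x + y) / 2) - g ((x + y) / 2)| ≤ ε) (hy : |f y - g y| ≤ ε) :
    |f ((x + y) / 2) - (f x + f y) / 2| ≤ 2 * ε := by
  rw [abs_le] at *
  constructor <;> linarith

lemma exists_breakpoint_mem_Ioo {ι : Type*} [Fintype ι] {f : ℝ → ℝ} {x y ε c a : ℝ}
    {A b : ι → ℝ} (hxy : x ≤ y)
    (hdev : 2 * ε < |f ((x + y) / 2) - (f x + f y) / 2|)
    (hx : |f x - reluNetwork c a A b x| ≤ ε)
    (hmid : |f ((x + y) / 2) - reluNetwork c a A b ((x + y) / 2)| ≤ ε)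
    (hy : |f y - reluNetwork c a A b y| ≤ ε) :
    ∃ i, b i ∈ Ioo x y := by
  by_contra! hb
  exact hdev.not_ge <| abs_sub_midpoint_average_le
    (two_mul_reluNetwork_midpoint c a A b hxy hb) hx hmid hy

lemma Fintype.card_le_of_pairwise_disjoint_of_forall_exists_mem {ι κ α : Type*}
    [Fintype ι] [Fintype κ] {s : ι → Set α} {b : κ → α} (hs : Pairwise (Disjoint on s))
    (h : ∀ j, ∃ i, b i ∈ s j) : Fintype.card ι ≤ Fintype.card κ := by
  choose φ hφ using h
  refine Fintype.card_le_of_injective φ fun j k hjk => ?_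
  by_contra hne
  exact Set.disjoint_left.mp (hs hne) (hφ j) (hjk ▸ hφ k)

theorem midpoint_deviation_forces_breakpoints_general
    (ε : ℝ) (f : ℝ → ℝ) (m N : ℕ)
    (a' m' c' : Fin m → ℝ)
    (h_lt₁ : ∀ j, a' j < m' j) (h_lt₂ : ∀ j, m' j < c' j)
    (h_mid : ∀ j, m' j = (a' j + c' j) / 2)
    (h_disj : ∀ j k, j ≠ k → Disjoint (Set.Ioo (a' j) (c' j)) (Set.Ioo (a' k) (c' k)))
    (h_dev : ∀ j, 2 * ε < |f (m' j) - (f (a' j) + f (c' j)) / 2|)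
    (c a : ℝ) (A : Fin N → ℝ) (b : Fin N → ℝ)
    (g : ℝ → ℝ) (hg : g = fun x => c + a * x + ∑ i, A i * max 0 (x - b i))
    (h_approx : ∀ j, |f (a' j) - g (a' j)| ≤ ε ∧ |f (m' j) - g (m' j)| ≤ ε ∧
      |f (c' j) - g (c' j)| ≤ ε) :
    (∀ j, ∃ i, b i ∈ Set.Ioo (a' j) (c' j)) ∧ m ≤ N := by
  have hg' : g = reluNetwork c a A b := hg
  subst hg'
  have h_breakpoint : ∀ j, ∃ i, b i ∈ Ioo (a' j) (c' j) := by
    intro j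
    obtain ⟨ha, hm, hc⟩ := h_approx j
    have hdev := h_dev j
    rw [h_mid j] at hdev hm
    exact exists_breakpoint_mem_Ioo ((h_lt₁ j).trans (h_lt₂ j)).le hdev ha hm hc
  refine ⟨h_breakpoint, ?_⟩
  simpa using Fintype.card_le_of_pairwise_disjoint_of_forall_exists_mem
    (fun j k hne => h_disj j k hne) h_breakpoint

/-- If `f` has `m` disjoint midpoint triples `a_j < m_j < c_j` on which it
deviates from affinity by more than `2ε`, then any one-hidden-layer ReLU network
`g x = c + a·x + ∑ i, A i * max 0 (x - b i)` that is `ε`-accurate at all the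
points `a_j, m_j, c_j` must have a breakpoint in each interval `(a_j, c_j)`;
in particular it has at least `m` breakpoints. -/
theorem midpoint_deviation_forces_breakpoints
    (ε : ℝ) (hε : 0 < ε) (f : ℝ → ℝ) (m N : ℕ)
    (a' m' c' : Fin m → ℝ)
    (h_lt₁ : ∀ j, a' j < m' j) (h_lt₂ : ∀ j, m' j < c' j)
    (h_mid : ∀ j, m' j = (a' j + c' j) / 2)
    (h_disj : ∀ j k, j ≠ k → Disjoint (Set.Ioo (a' j) (c' j)) (Set.Ioo (a' k) (c' k)))
    (h_dev : ∀ j, 2 * ε < |f (m' j) - (f (a' j) + f (c' j)) / 2|)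
    (c a : ℝ) (A : Fin N → ℝ) (b : Fin N → ℝ)
    (g : ℝ → ℝ) (hg : g = fun x => c + a * x + ∑ i, A i * max 0 (x - b i))
    (h_approx : ∀ j, |f (a' j) - g (a' j)| ≤ ε ∧ |f (m' j) - g (m' j)| ≤ ε ∧
      |f (c' j) - g (c' j)| ≤ ε) :
    (∀ j, ∃ i, b i ∈ Set.Ioo (a' j) (c' j)) ∧ m ≤ N :=
  midpoint_deviation_forces_breakpoints_general ε f m N a' m' c' h_lt₁ h_lt₂ h_mid h_disj h_dev c a
    A b g hg h_approx
end

section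
/- Let T(x) = 1 − |2x − 1| and let T^[L] be its L-fold composition. If g is any function of the form g(x) = c + a·x + ∑_{i=1}^N a_i · max(0, x − b_i) satisfying |T^[L](x) − g(x)| ≤ 1/4 for all x ∈ [0, 1], then N ≥ 2^{L−1}. -/
/-!
On the dyadic grid `k / 2^L` the iterated tent map alternates between `0` (even `k`) and `1`
(odd `k`), so an approximant within `1/4` is `≤ 1/4` at the even points and `≥ 3/4` at the odd
ones. A shallow ReLU network is affine between consecutive breakpoints, and an affine function
cannot be `≤ 1/4` at both ends of an interval and `≥ 3/4` at its midpoint. Hence each of the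
`2^(L-1)` disjoint intervals `(2t / 2^L, (2t + 2) / 2^L)` contains a breakpoint.
-/

open Set

def tent (x : ℝ) : ℝ := 1 - |2 * x - 1|

lemma tent_of_le_half {x : ℝ} (hx : x ≤ 1 / 2) : tent x = 2 * x := by
  rw [tent, abs_of_nonpos (by linarith)]
  ring

lemma tent_one_sub (x : ℝ) : tent (1 - x) = tent x := by
  rw [tent, tent, ← abs_neg]
  ring_nf

lemma tent_natCast_div_two_pow_succ {m k : ℕ} (hk : k ≤ 2 ^ m) :
    tent (k / 2 ^ (m + 1)) = k / 2 ^ m := by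
  rw [tent_of_le_half, pow_succ]
  · field_simp
  · rw [div_le_iff₀ (by positivity), pow_succ]
    have : (k : ℝ) ≤ 2 ^ m := by exact_mod_cast hk
    linarith

lemma tent_iterate_natCast_div_two_pow (m : ℕ) {k : ℕ} (hk : k ≤ 2 ^ m) :
    tent^[m] (k / 2 ^ m) = (k % 2 : ℕ) := by
  induction m generalizing k with
  | zero => interval_cases k <;> simp
  | succ m ih =>
    rw [Function.iterate_succ_apply]
    rcases le_total k (2 ^ m) with hk' | hk'
    · rw [tent_natCast_div_two_pow_succ hk', ih hk']
    · have hpow : 2 ^ (m + 1) = 2 * 2 ^ m := pow_succ' 2 m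
      have hpar : (2 ^ (m + 1) - k) % 2 = k % 2 := by omega
      have hrefl : (k : ℝ) / 2 ^ (m + 1) = 1 - ((2 ^ (m + 1) - k : ℕ) : ℝ) / 2 ^ (m + 1) := by
        rw [Nat.cast_sub hk]
        field_simp
        push_cast
        ring
      rw [hrefl, tent_one_sub, tent_natCast_div_two_pow_succ (by omega), ih (by omega), hpar]

lemma natCast_div_two_pow_mem_Icc {m k : ℕ} (hk : k ≤ 2 ^ m) :
    (k : ℝ) / 2 ^ m ∈ Icc (0 : ℝ) 1 :=
  ⟨by positivity, div_le_one_of_le₀ (by exact_mod_cast hk) (by positivity)⟩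

section ShallowReLU

variable {ι : Type*} [Fintype ι]

def shallowReLU (c a : ℝ) (A b : ι → ℝ) (x : ℝ) : ℝ :=
  c + a * x + ∑ i, A i * max 0 (x - b i)

lemma max_zero_sub_midpoint {u w β : ℝ} (huw : u ≤ w) (hβ : β ∉ Ioo u w) :
    2 * max 0 ((u + w) / 2 - β) = max 0 (u - β) + max 0 (w - β) := by
  rcases le_or_gt β u with h | h
  · rw [max_eq_right (by linarith), max_eq_right (by linarith), max_eq_right (by linarith)]
    ring
  · have : w ≤ β := not_lt.mp fun hw => hβ ⟨h, hw⟩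
    rw [max_eq_left (by linarith), max_eq_left (by linarith), max_eq_left (by linarith)]
    ring

lemma shallowReLU_midpoint (c a : ℝ) (A b : ι → ℝ) {u w : ℝ} (huw : u ≤ w)
    (hb : ∀ i, b i ∉ Ioo u w) :
    2 * shallowReLU c a A b ((u + w) / 2) = shallowReLU c a A b u + shallowReLU c a A b w := by
  have hsum : 2 * ∑ i, A i * max 0 ((u + w) / 2 - b i)
      = ∑ i, A i * max 0 (u - b i) + ∑ i, A i * max 0 (w - b i) := by
    rw [Finset.mul_sum, ← Finset.sum_add_distrib]
    refine Finset.sum_congr rfl fun i _ => ?_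
    rw [mul_left_comm, max_zero_sub_midpoint huw (hb i)]
    ring
  simp only [shallowReLU]
  linear_combination hsum

end ShallowReLU

lemma le_card_of_forall_exists_mem_Ioo {ι : Type*} [Fintype ι] (b : ι → ℝ) {δ : ℝ}
    (hδ : 0 < δ) {n : ℕ} (h : ∀ t < n, ∃ i, b i ∈ Ioo (t * δ) ((t + 1) * δ)) :
    n ≤ Fintype.card ι := by
  choose F hF using fun t : Fin n => h t t.isLt
  have hlt : ∀ s t : Fin n, F s = F t → (s : ℝ) < t + 1 := fun s t hst =>
    lt_of_mul_lt_mul_right (((hF s).1.trans_eq (congrArg b hst)).trans (hF t).2) hδ.le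
  have hinj : Function.Injective F := fun s t hst => by
    have h₁ : (s : ℕ) < t + 1 := by exact_mod_cast hlt s t hst
    have h₂ : (t : ℕ) < s + 1 := by exact_mod_cast hlt t s hst.symm
    exact Fin.ext (by omega)
  simpa using Fintype.card_le_of_injective F hinj

/-- Any one-hidden-layer ReLU network (with skip/affine term) that uniformly
approximates the `L`-fold iterate of the tent map `T x = 1 − |2x − 1|` on
`[0, 1]` to accuracy `1/4` must have at least `2^(L-1)` neurons. -/
theorem tent_iterate_shallow_approximation_lower_bound
    (T : ℝ → ℝ) (hT : T = fun x => 1 - |2 * x - 1|)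
    (L : ℕ) (hL : 1 ≤ L) (N : ℕ) (c a : ℝ) (A b : Fin N → ℝ)
    (g : ℝ → ℝ) (hg : g = fun x => c + a * x + ∑ i, A i * max 0 (x - b i))
    (happrox : ∀ x ∈ Set.Icc (0 : ℝ) 1, |T^[L] x - g x| ≤ 1 / 4) :
    2 ^ (L - 1) ≤ N := by
  obtain rfl : T = tent := hT
  obtain rfl : g = shallowReLU c a A b := hg
  have hval : ∀ k : ℕ, k ≤ 2 ^ L → ∀ x : ℝ, x = k / 2 ^ L →
      |((k % 2 : ℕ) : ℝ) - shallowReLU c a A b x| ≤ 1 / 4 := fun k hk x hx =>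
    hx ▸ tent_iterate_natCast_div_two_pow L hk ▸ happrox _ (natCast_div_two_pow_mem_Icc hk)
  have hpow : 2 ^ L = 2 * 2 ^ (L - 1) := by rw [← pow_succ']; congr; omega
  set δ : ℝ := 2 / 2 ^ L
  suffices ∀ t : ℕ, t < 2 ^ (L - 1) → ∃ i, b i ∈ Ioo (t * δ) ((t + 1) * δ) by
    simpa using le_card_of_forall_exists_mem_Ioo b (by positivity) this
  intro t ht
  by_contra! hb
  have hmid := shallowReLU_midpoint c a A b (by gcongr; linarith) hb
  have h₀ := hval (2 * t) (by omega) (t * δ) (by push_cast; ring)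
  have h₁ := hval (2 * t + 1) (by omega) ((t * δ + (t + 1) * δ) / 2) (by push_cast; ring)
  have h₂ := hval (2 * t + 2) (by omega) ((t + 1) * δ) (by push_cast; ring)
  simp only [Nat.mul_mod_right, Nat.mul_add_mod] at h₀ h₁ h₂
  rw [abs_le] at h₀ h₁ h₂
  push_cast at h₀ h₁ h₂
  linarith [h₀.1, h₁.2, h₂.1]
end
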